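/- Let A be a regular invertible d×d matrix with Jordan decomposition A = P^{-1}ΛP and suppose z is a vector such that v = Pz has min_i |v_i| ≥ ψ > 0. Then the matrix F = Σ_{i=1}^{T} A^{-i+1} z zᵀ (A^{-i+1})ᵀ satisfies F ⪰ (φ_min(A)² ψ² / σ_max(P)²) I, where φ_min(A)² = inf_{v : min_i|v_i| ≥ 1} σ_min(Σ_{i=1}^T Λ^{-i+1} v v* (Λ^{-i+1})*) > 0. -/

import Mathlib

/-!
Writing `A⁻¹ = P⁻¹ Λ⁻¹ P` and `P z = ψ v`, the matrix `F` is the congruence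
`P⁻¹ (ψ² S) P⁻ᴴ` of the Gram matrix `S = Σᵢ Λ⁻ⁱ v v* Λ⁻ⁱᴴ` of a vector `v` in the outbox, so
`S ⪰ φ² I` gives `F ⪰ ψ² φ² P⁻¹ P⁻ᴴ`. Finally `P Pᴴ ⪯ ‖P‖² I ⪯ σ² I` in the C⋆-algebra of
matrices, and conjugating by `P⁻¹` turns this into `P⁻¹ P⁻ᴴ ⪰ σ⁻² I`.
-/

open Matrix
open scoped ComplexOrder MatrixOrder

variable {n 𝕜 : Type*} [Fintype n] [DecidableEq n] [RCLike 𝕜]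

/-- `K Kᴴ` for the Krylov matrix `K = [v, B v, …, B^{T-1} v]`. -/
def krylovGram (B : Matrix n n 𝕜) (v : n → 𝕜) (T : ℕ) : Matrix n n 𝕜 :=
  ∑ i ∈ Finset.range T, B ^ i * vecMulVec v (star v) * (B ^ i)ᴴ

lemma krylovGram_posSemidef (B : Matrix n n 𝕜) (v : n → 𝕜) (T : ℕ) :
    (krylovGram B v T).PosSemidef :=
  posSemidef_sum _ fun _ _ => (posSemidef_vecMulVec_self_star v).mul_mul_conjTranspose_same _

lemma krylovGram_real_smul (B : Matrix n n 𝕜) (c : ℝ) (v : n → 𝕜) (T : ℕ) :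
    krylovGram B (c • v) T = c ^ 2 • krylovGram B v T := by
  have hvv : vecMulVec (c • v) (star (c • v)) = c ^ 2 • vecMulVec v (star v) := by
    rw [star_smul, star_trivial, smul_vecMulVec, vecMulVec_smul, smul_smul, sq]
  simp only [krylovGram, hvv, Finset.smul_sum, Matrix.mul_smul, Matrix.smul_mul]

lemma krylovGram_conj {P : Matrix n n 𝕜} (hP : IsUnit P.det) (B : Matrix n n 𝕜) (z : n → 𝕜)
    (T : ℕ) : krylovGram (P⁻¹ * B * P) z T = P⁻¹ * krylovGram B (P *ᵥ z) T * P⁻¹ᴴ := by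
  have hpow (i : ℕ) : (P⁻¹ * B * P) ^ i = P⁻¹ * B ^ i * P :=
    Units.conj_pow' (P.nonsingInvUnit hP) B i
  have hz : P * vecMulVec z (star z) * Pᴴ = vecMulVec (P *ᵥ z) (star (P *ᵥ z)) := by
    rw [mul_vecMulVec, vecMulVec_mul, star_mulVec]
  simp only [krylovGram, Finset.mul_sum, Finset.sum_mul, hpow, conjTranspose_mul, ← hz]
  exact Finset.sum_congr rfl fun _ _ => by simp only [Matrix.mul_assoc]

omit [DecidableEq n] in
lemma re_star_dotProduct_self (x : n → 𝕜) : RCLike.re (star x ⬝ᵥ x) = ∑ j, ‖x j‖ ^ 2 := by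
  simp only [dotProduct, Pi.star_apply, RCLike.star_def, RCLike.conj_mul, map_sum]
  exact Finset.sum_congr rfl fun j _ => by rw [← RCLike.ofReal_pow, RCLike.ofReal_re]

lemma smul_one_le_of_le_re_dotProduct_mulVec {M : Matrix n n 𝕜} (hM : M.IsHermitian) {c : ℝ}
    (h : ∀ x, c * ∑ j, ‖x j‖ ^ 2 ≤ RCLike.re (star x ⬝ᵥ M *ᵥ x)) :
    c • (1 : Matrix n n 𝕜) ≤ M := by
  have hH : (M - c • (1 : Matrix n n 𝕜)).IsHermitian :=
    hM.sub (isHermitian_one.smul (IsSelfAdjoint.all c))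
  refine PosSemidef.of_dotProduct_mulVec_nonneg hH fun x => ?_
  refine RCLike.nonneg_iff.2 ⟨?_, hH.im_star_dotProduct_mulVec_self x⟩
  have hx := h x
  simp only [sub_mulVec, dotProduct_sub, smul_mulVec, one_mulVec, dotProduct_smul, map_sub,
    RCLike.smul_re, re_star_dotProduct_self]
  linarith

section L2Operator

open scoped Matrix.Norms.L2Operator

lemma l2_opNorm_le_of_forall {m : Type*} [Fintype m] {A : Matrix m n 𝕜} {σ : ℝ} (hσ : 0 ≤ σ)
    (h : ∀ x : n → 𝕜, √(∑ i, ‖(A *ᵥ x) i‖ ^ 2) ≤ σ * √(∑ i, ‖x i‖ ^ 2)) : ‖A‖ ≤ σ := by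
  rw [l2_opNorm_def]
  refine ContinuousLinearMap.opNorm_le_bound _ hσ fun x => ?_
  simpa [EuclideanSpace.norm_eq] using h x

lemma mul_conjTranspose_le_smul_one {A : Matrix n n ℂ} {σ : ℝ} (h : ‖A‖ ≤ σ) :
    A * Aᴴ ≤ σ ^ 2 • (1 : Matrix n n ℂ) := by
  have hA := CStarAlgebra.mul_star_le_algebraMap_norm_sq (a := A)
  rw [Algebra.algebraMap_eq_smul_one] at hA
  refine hA.trans ?_
  rw [le_iff, ← sub_smul]
  exact PosSemidef.one.smul (sub_nonneg.2 (pow_le_pow_left₀ (norm_nonneg _) h 2))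

end L2Operator

lemma one_le_smul_inv_mul_inv_conjTranspose {P : Matrix n n 𝕜} (hP : IsUnit P.det) {c : ℝ}
    (h : P * Pᴴ ≤ c • 1) : 1 ≤ c • (P⁻¹ * P⁻¹ᴴ) := by
  have hconj := star_right_conjugate_le_conjugate h P⁻¹
  rwa [star_eq_conjTranspose, ← Matrix.mul_assoc, Matrix.mul_assoc _ Pᴴ,
    ← conjTranspose_mul, nonsing_inv_mul P hP, conjTranspose_one, Matrix.mul_one,
    Matrix.mul_smul, Matrix.smul_mul, Matrix.mul_one] at hconj

theorem stmt18_general {d : ℕ} (T : ℕ)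
    (A P Λ : Matrix (Fin d) (Fin d) ℂ)
    (hP : IsUnit P.det)
    (hdecomp : A = P⁻¹ * Λ * P)
    (φ ψ σ : ℝ) (hψ : 0 < ψ) (hσ : 0 < σ)
    (hφmin : ∀ v : Fin d → ℂ, (∀ i, 1 ≤ ‖v i‖) → ∀ x : Fin d → ℂ,
        φ ^ 2 * (∑ j, ‖x j‖ ^ 2) ≤
          (star x ⬝ᵥ ((∑ i ∈ Finset.range T,
              (Λ⁻¹) ^ i * vecMulVec v (star v) * ((Λ⁻¹) ^ i)ᴴ) *ᵥ x)).re)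
    (hσmax : ∀ x : Fin d → ℂ,
        Real.sqrt (∑ i, ‖(P *ᵥ x) i‖ ^ 2) ≤ σ * Real.sqrt (∑ i, ‖x i‖ ^ 2))
    (z : Fin d → ℂ) (hz : ∀ i, ψ ≤ ‖(P *ᵥ z) i‖) :
    ((∑ i ∈ Finset.range T, (A⁻¹) ^ i * vecMulVec z (star z) * ((A⁻¹) ^ i)ᴴ)
      - ((φ ^ 2 * ψ ^ 2 / σ ^ 2 : ℝ) : ℂ) • 1).PosSemidef := by
  set v : Fin d → ℂ := ψ⁻¹ • (P *ᵥ z)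
  have hPz : P *ᵥ z = ψ • v := by simp only [v, smul_smul, mul_inv_cancel₀ hψ.ne', one_smul]
  have hv (i : Fin d) : 1 ≤ ‖v i‖ := by
    simpa [v, norm_smul, abs_of_pos hψ, le_inv_mul_iff₀ hψ] using hz i
  have hS : φ ^ 2 • 1 ≤ krylovGram Λ⁻¹ v T :=
    smul_one_le_of_le_re_dotProduct_mulVec (krylovGram_posSemidef _ _ _).isHermitian (hφmin v hv)
  have hF : krylovGram A⁻¹ z T = P⁻¹ * (ψ ^ 2 • krylovGram Λ⁻¹ v T) * P⁻¹ᴴ := by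
    rw [hdecomp, Matrix.mul_inv_rev, Matrix.mul_inv_rev, nonsing_inv_nonsing_inv P hP,
      ← Matrix.mul_assoc, krylovGram_conj hP, hPz, krylovGram_real_smul]
  have hPP : 1 ≤ σ ^ 2 • (P⁻¹ * P⁻¹ᴴ) := one_le_smul_inv_mul_inv_conjTranspose hP
    (mul_conjTranspose_le_smul_one (l2_opNorm_le_of_forall hσ.le hσmax))
  rw [Complex.coe_smul]
  change _ ≤ krylovGram A⁻¹ z T
  calc (φ ^ 2 * ψ ^ 2 / σ ^ 2) • (1 : Matrix (Fin d) (Fin d) ℂ)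
      ≤ (φ ^ 2 * ψ ^ 2 / σ ^ 2) • (σ ^ 2 • (P⁻¹ * P⁻¹ᴴ)) :=
        smul_le_smul_of_nonneg_left hPP (by positivity)
    _ = P⁻¹ * (ψ ^ 2 • φ ^ 2 • 1) * P⁻¹ᴴ := by
        rw [smul_smul, smul_smul, div_mul_cancel₀ _ (by positivity), Matrix.mul_smul,
          Matrix.smul_mul, Matrix.mul_one, mul_comm]
    _ ≤ P⁻¹ * (ψ ^ 2 • krylovGram Λ⁻¹ v T) * P⁻¹ᴴ :=
        star_right_conjugate_le_conjugate (smul_le_smul_of_nonneg_left hS (by positivity)) _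
    _ = krylovGram A⁻¹ z T := hF.symm

/-- let `A` be a regular invertible matrix with Jordan decomposition
`A = P⁻¹ Λ P`, let `φ` be a (nonnegative) lower bound as in the definition of `φ_min(A)`
(i.e. `φ² ≤ σ_min(Σ_{i=1}^T Λ^{-i+1} v v* (Λ^{-i+1})*)` for every `v` in the outbox
`min_i |v_i| ≥ 1`), let `σ ≥ σ_max(P)` and suppose `z` satisfies `min_i |(Pz)_i| ≥ ψ > 0`.
Then `F = Σ_{i=1}^T A^{-i+1} z z* (A^{-i+1})* ⪰ (φ² ψ² / σ²) I`. -/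
theorem stmt18 {d : ℕ} (T : ℕ) (hT : d ≤ T)
    (A P Λ : Matrix (Fin d) (Fin d) ℂ)
    (hA : IsUnit A.det) (hP : IsUnit P.det)
    (hdecomp : A = P⁻¹ * Λ * P)
    (hreg : minpoly ℂ A = A.charpoly)
    (φ ψ σ : ℝ) (hφ : 0 ≤ φ) (hψ : 0 < ψ) (hσ : 0 < σ)
    (hφmin : ∀ v : Fin d → ℂ, (∀ i, 1 ≤ ‖v i‖) → ∀ x : Fin d → ℂ,
        φ ^ 2 * (∑ j, ‖x j‖ ^ 2) ≤
          (star x ⬝ᵥ ((∑ i ∈ Finset.range T,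
              (Λ⁻¹) ^ i * vecMulVec v (star v) * ((Λ⁻¹) ^ i)ᴴ) *ᵥ x)).re)
    (hσmax : ∀ x : Fin d → ℂ,
        Real.sqrt (∑ i, ‖(P *ᵥ x) i‖ ^ 2) ≤ σ * Real.sqrt (∑ i, ‖x i‖ ^ 2))
    (z : Fin d → ℂ) (hz : ∀ i, ψ ≤ ‖(P *ᵥ z) i‖) :
    ((∑ i ∈ Finset.range T, (A⁻¹) ^ i * vecMulVec z (star z) * ((A⁻¹) ^ i)ᴴ)
      - ((φ ^ 2 * ψ ^ 2 / σ ^ 2 : ℝ) : ℂ) • 1).PosSemidef :=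
  stmt18_general T A P Λ hP hdecomp φ ψ σ hψ hσ hφmin hσmax z hz
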